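/- Let L be the symmetrically normalized Laplacian of a finite connected simple undirected graph on vertex set V, and let S ⊊ V be a nonempty proper subset. Then the principal submatrix L_{S^C, S^C} of L indexed by the complement of S is positive definite, hence invertible (so the Feature Propagation reconstruction operator is well defined). -/

import Mathlib

/-!
Writing `d = deg^{-1/2}`, the normalized Laplacian is `diag d * (D - A) * diag d`, and taking a
principal submatrix commutes with this diagonal congruence, so it suffices that the grounded
Laplacian `(D - A)_{Sᶜ,Sᶜ}` is positive definite. Its quadratic form at `x` is that of the
positive semidefinite matrix `D - A` at the zero extension `v` of `x`; if this vanishes then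
`(D - A) v = 0`, so `v` is constant on the connected graph, and since `v` vanishes on `S ≠ ∅`
it is zero.
-/

open Matrix Function
open scoped ComplexOrder

theorem Function.star_extend_zero {α β R : Type*} [AddMonoid R] [StarAddMonoid R] (e : α → β)
    (x : α → R) : star (extend e x 0) = extend e (star x) 0 := by
  ext i
  rw [Pi.star_apply, apply_extend star]
  congr 1
  exact funext fun _ => star_zero R

namespace Matrix

variable {m n : Type*} [Fintype m] [Fintype n]

section Extend

variable {R : Type*} [NonUnitalNonAssocSemiring R] {e : m → n}

lemma extend_zero_dotProduct (he : Injective e) (x : m → R) (v : n → R) :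
    extend e x 0 ⬝ᵥ v = x ⬝ᵥ (v ∘ e) :=
  (Fintype.sum_of_injective e he _ _
    (fun i hi => by simp [extend_apply' _ _ _ (by simpa using hi)])
    (fun i => by simp [he.extend_apply])).symm

lemma dotProduct_extend_zero (he : Injective e) (v : n → R) (x : m → R) :
    v ⬝ᵥ extend e x 0 = (v ∘ e) ⬝ᵥ x :=
  (Fintype.sum_of_injective e he _ _
    (fun i hi => by simp [extend_apply' _ _ _ (by simpa using hi)])
    (fun i => by simp [he.extend_apply])).symm

lemma submatrix_mulVec_eq_comp (he : Injective e) (M : Matrix n n R) (x : m → R) :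
    M.submatrix e e *ᵥ x = (M *ᵥ extend e x 0) ∘ e := by
  ext i
  exact (dotProduct_extend_zero he (M (e i)) x).symm

lemma star_dotProduct_submatrix_mulVec [StarRing R] (he : Injective e) (M : Matrix n n R)
    (x : m → R) :
    star x ⬝ᵥ (M.submatrix e e *ᵥ x) = star (extend e x 0) ⬝ᵥ (M *ᵥ extend e x 0) := by
  rw [star_extend_zero, extend_zero_dotProduct he, submatrix_mulVec_eq_comp he]

end Extend

theorem PosSemidef.posDef_submatrix_of_ker {𝕜 : Type*} [RCLike 𝕜] {M : Matrix n n 𝕜}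
    (hM : M.PosSemidef) {e : m → n} (he : Injective e)
    (hker : ∀ v, M *ᵥ v = 0 → (∀ i ∉ Set.range e, v i = 0) → v = 0) :
    (M.submatrix e e).PosDef := by
  refine .of_dotProduct_mulVec_pos (hM.isHermitian.submatrix e) fun x hx => ?_
  refine ((hM.submatrix e).dotProduct_mulVec_nonneg x).lt_of_ne' fun hzero => hx ?_
  have hextend : extend e x 0 = 0 := by
    refine hker _ ?_ fun i hi => extend_apply' _ _ _ (by simpa using hi)
    rwa [← hM.dotProduct_mulVec_zero_iff, ← star_dotProduct_submatrix_mulVec he]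
  rw [← extend_comp he x 0, hextend]
  rfl

theorem PosDef.diagonal_star_mul_mul_diagonal {R : Type*} [CommRing R] [PartialOrder R]
    [StarRing R] [DecidableEq n] {M : Matrix n n R} (hM : M.PosDef) {d : n → R} (hd : IsUnit d) :
    (diagonal (star d) * M * diagonal d).PosDef := by
  simpa [star_eq_conjTranspose, diagonal_conjTranspose] using
    (isUnit_diagonal.mpr hd).posDef_star_left_conjugate_iff.mpr hM

lemma submatrix_diagonal_mul_mul_diagonal {α : Type*} [NonUnitalNonAssocSemiring α]
    [DecidableEq m] [DecidableEq n] (d d' : n → α) (M : Matrix n n α) (e : m → n) :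
    (diagonal d * M * diagonal d').submatrix e e =
      diagonal (d ∘ e) * M.submatrix e e * diagonal (d' ∘ e) := by
  ext i j
  simp [diagonal_mul, mul_diagonal]

end Matrix

namespace SimpleGraph

variable {V : Type*} [Fintype V] [DecidableEq V] (G : SimpleGraph V) [DecidableRel G.Adj]

theorem posDef_lapMatrix_submatrix {m : Type*} [Fintype m] (hG : G.Connected) {e : m → V}
    (he : Injective e) (hnot_surj : ¬ Surjective e) : ((G.lapMatrix ℝ).submatrix e e).PosDef := by
  refine (posSemidef_lapMatrix ℝ G).posDef_submatrix_of_ker he fun v hv hsupp => ?_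
  obtain ⟨s, hs⟩ := not_forall.mp hnot_surj
  ext i
  exact (G.lapMatrix_mulVec_eq_zero_iff_forall_reachable.mp hv i s (hG.preconnected i s)).trans
    (hsupp s (by simpa using hs))

theorem diagonal_mul_lapMatrix_mul_diagonal {R : Type*} [CommRing R] {d : V → R}
    (hd : ∀ i, d i * G.degree i * d i = 1) :
    diagonal d * G.lapMatrix R * diagonal d = 1 - diagonal d * G.adjMatrix R * diagonal d := by
  have hdeg : diagonal d * G.degMatrix R * diagonal d = 1 := by
    rw [degMatrix, diagonal_mul_diagonal, diagonal_mul_diagonal, ← diagonal_one]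
    exact congrArg diagonal (funext hd)
  rw [lapMatrix, Matrix.mul_sub, Matrix.sub_mul, hdeg]

end SimpleGraph

theorem normalized_laplacian_principal_submatrix_posDef_general
    {N : ℕ} (G : SimpleGraph (Fin N)) [DecidableRel G.Adj]
    (hconn : G.Connected) (hdeg : ∀ i, 0 < G.degree i)
    (A : Matrix (Fin N) (Fin N) ℝ) (hA : A = G.adjMatrix ℝ)
    (Dinvhalf : Matrix (Fin N) (Fin N) ℝ)
    (hD : Dinvhalf = Matrix.diagonal fun i => (Real.sqrt (G.degree i))⁻¹)
    (L : Matrix (Fin N) (Fin N) ℝ) (hL : L = 1 - Dinvhalf * A * Dinvhalf)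
    (S : Finset (Fin N)) (hS : S.Nonempty) :
    (L.submatrix (Subtype.val : {i : Fin N // i ∉ S} → Fin N)
        (Subtype.val : {i : Fin N // i ∉ S} → Fin N)).PosDef := by
  set d : Fin N → ℝ := fun i => (√(G.degree i))⁻¹
  have hd_ne (i : Fin N) : d i ≠ 0 := inv_ne_zero (Real.sqrt_ne_zero'.mpr (mod_cast hdeg i))
  have hd (i : Fin N) : d i * G.degree i * d i = 1 := by
    rw [mul_right_comm, ← sq, inv_pow, Real.sq_sqrt (Nat.cast_nonneg _),
      inv_mul_cancel₀ (mod_cast (hdeg i).ne')]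
  have hval_not_surj : ¬ Surjective (Subtype.val : {i : Fin N // i ∉ S} → Fin N) := by
    obtain ⟨s, hs⟩ := hS
    exact fun h => (h s).elim fun i hi => i.prop (hi ▸ hs)
  subst hA hD hL
  rw [← G.diagonal_mul_lapMatrix_mul_diagonal hd, submatrix_diagonal_mul_mul_diagonal]
  simpa using (G.posDef_lapMatrix_submatrix hconn Subtype.val_injective hval_not_surj)
    |>.diagonal_star_mul_mul_diagonal (d := d ∘ Subtype.val)
      (Pi.isUnit_iff.mpr fun i => (hd_ne i).isUnit)

/-- For a finite connected simple undirected graph with N ≥ 2 vertices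
(hence positive degrees) and a nonempty proper sample set S, the principal submatrix of the
symmetrically normalized Laplacian L = I - D^{-1/2} A D^{-1/2} indexed by the complement of S
is positive definite (hence invertible, so Feature Propagation is well defined). -/
theorem normalized_laplacian_principal_submatrix_posDef
    {N : ℕ} (hN : 2 ≤ N) (G : SimpleGraph (Fin N)) [DecidableRel G.Adj]
    (hconn : G.Connected) (hdeg : ∀ i, 0 < G.degree i)
    (A : Matrix (Fin N) (Fin N) ℝ) (hA : A = G.adjMatrix ℝ)
    (Dinvhalf : Matrix (Fin N) (Fin N) ℝ)
    (hD : Dinvhalf = Matrix.diagonal fun i => (Real.sqrt (G.degree i))⁻¹)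
    (L : Matrix (Fin N) (Fin N) ℝ) (hL : L = 1 - Dinvhalf * A * Dinvhalf)
    (S : Finset (Fin N)) (hS : S.Nonempty) (hS' : S ≠ Finset.univ) :
    (L.submatrix (Subtype.val : {i : Fin N // i ∉ S} → Fin N)
        (Subtype.val : {i : Fin N // i ∉ S} → Fin N)).PosDef :=
  normalized_laplacian_principal_submatrix_posDef_general G hconn hdeg A hA Dinvhalf hD L hL S hS
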